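/- Let A, M be vector spaces with maps μ: A⊗A→A, l: A⊗M→M, r: M⊗A→M, α: A→A, φ: M→M, all commuting suitably so that μ+l+r ∈ V_2^{α+φ} on V = A⊕M. Then μ defines a Hom-associative structure on A and (l,r) define an A-bimodule structure on M with respect to φ if and only if μ + l + r is a Maurer-Cartan element of the graded Lie algebra (⊕_{n≥1} V_n^{α+φ}, [·,·]_{α+φ}), i.e. [μ+l+r, μ+l+r]_{α+φ} = 0. -/
import Mathlib


section

variable {V : Type*} [AddCommGroup V]

/-- Twisted Gerstenhaber circle product (cochains encoded on sequences). -/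
def gcomp (β : V → V) (m n : ℕ) (f g : (ℕ → V) → V) : (ℕ → V) → V :=
  fun a => ∑ i ∈ Finset.range m, ((-1 : ℤ)) ^ (i * (n - 1)) •
    f (fun j => if j < i then β^[n - 1] (a j)
        else if j = i then g (fun t => a (i + t))
        else β^[n - 1] (a (j + (n - 1))))

/-- Gerstenhaber bracket. -/
def gbracket (β : V → V) (m n : ℕ) (f g : (ℕ → V) → V) : (ℕ → V) → V :=
  fun a => gcomp β m n f g a - ((-1 : ℤ)) ^ ((m - 1) * (n - 1)) • gcomp β n m g f a

end

section

variable {K A M : Type*} [Field K] [AddCommGroup A] [Module K A]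
  [AddCommGroup M] [Module K M]

/-- The lift `μ + l + r` as a 2-cochain on `V = A ⊕ M`. -/
def mlr (μ : A →ₗ[K] A →ₗ[K] A) (l : A →ₗ[K] M →ₗ[K] M)
    (r : M →ₗ[K] A →ₗ[K] M) : (ℕ → A × M) → A × M :=
  fun a => (μ (a 0).1 (a 1).1, l (a 0).1 (a 1).2 + r (a 0).2 (a 1).1)

/-- The structure map `α + φ` on `V = A ⊕ M`. -/
def sdβ (α : A →ₗ[K] A) (φ : M →ₗ[K] M) : A × M → A × M :=
  fun p => (α p.1, φ p.2)
lemma key (μ : A →ₗ[K] A →ₗ[K] A) (α : A →ₗ[K] A)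
    (l : A →ₗ[K] M →ₗ[K] M) (r : M →ₗ[K] A →ₗ[K] M) (φ : M →ₗ[K] M)
    (a : ℕ → A × M) :
    gbracket (sdβ α φ) 2 2 (mlr μ l r) (mlr μ l r) a =
    (2:ℤ) • ((μ (μ (a 0).1 (a 1).1) (α (a 2).1) - μ (α (a 0).1) (μ (a 1).1 (a 2).1),
      l (μ (a 0).1 (a 1).1) (φ (a 2).2) + (r (l (a 0).1 (a 1).2) (α (a 2).1) + r (r (a 0).2 (a 1).1) (α (a 2).1))
      - (l (α (a 0).1) (l (a 1).1 (a 2).2) + l (α (a 0).1) (r (a 1).2 (a 2).1) + r (φ (a 0).2) (μ (a 1).1 (a 2).1)))) := by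
  simp [gbracket, gcomp, mlr, sdβ, Finset.sum_range_succ, Prod.ext_iff, two_smul]
  constructor <;> abel

/-- `μ` is Hom-associative on `A` and `(l,r)` is an `A`-bimodule
structure on `M` w.r.t. `φ` iff `μ + l + r` is a Maurer-Cartan element of the
graded Lie algebra `(⊕ₙ V_n^{α+φ}, [·,·]_{α+φ})`, i.e. `[μ+l+r, μ+l+r] = 0`. -/
theorem stmt_11 (h2 : (2 : K) ≠ 0)
    (μ : A →ₗ[K] A →ₗ[K] A) (α : A →ₗ[K] A)
    (l : A →ₗ[K] M →ₗ[K] M) (r : M →ₗ[K] A →ₗ[K] M) (φ : M →ₗ[K] M)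
    (hcomm : ∀ a : ℕ → A × M,
      sdβ α φ (mlr μ l r a) = mlr μ l r (fun i => sdβ α φ (a i))) :
    ((∀ x y z : A, μ (μ x y) (α z) = μ (α x) (μ y z)) ∧
     (∀ x v, φ (l x v) = l (α x) (φ v)) ∧
     (∀ v x, φ (r v x) = r (φ v) (α x)) ∧
     (∀ x y v, l (μ x y) (φ v) = l (α x) (l y v)) ∧
     (∀ v x y, r (φ v) (μ x y) = r (r v x) (α y)) ∧
     (∀ x v y, l (α x) (r v y) = r (l x v) (α y))) ↔
    (∀ a : ℕ → A × M,
      gbracket (sdβ α φ) 2 2 (mlr μ l r) (mlr μ l r) a = 0) := by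
  have hl : ∀ x v, φ (l x v) = l (α x) (φ v) := by
    intro x v
    have := hcomm (fun i => if i = 0 then ((x : A), (0 : M)) else ((0 : A), v))
    simpa [mlr, sdβ, Prod.ext_iff] using congrArg Prod.snd this
  have hr : ∀ v x, φ (r v x) = r (φ v) (α x) := by
    intro v x
    have := hcomm (fun i => if i = 0 then ((0 : A), v) else ((x : A), (0 : M)))
    simpa [mlr, sdβ, Prod.ext_iff] using congrArg Prod.snd this
  have hz : ∀ a : ℕ → A × M,
      gbracket (sdβ α φ) 2 2 (mlr μ l r) (mlr μ l r) a = 0 ↔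
      (μ (μ (a 0).1 (a 1).1) (α (a 2).1) = μ (α (a 0).1) (μ (a 1).1 (a 2).1) ∧
       l (μ (a 0).1 (a 1).1) (φ (a 2).2) + (r (l (a 0).1 (a 1).2) (α (a 2).1) + r (r (a 0).2 (a 1).1) (α (a 2).1))
       = l (α (a 0).1) (l (a 1).1 (a 2).2) + l (α (a 0).1) (r (a 1).2 (a 2).1) + r (φ (a 0).2) (μ (a 1).1 (a 2).1)) := by
    intro a
    rw [key]
    have h2' : ((2 : ℤ) : K) ≠ 0 := by exact_mod_cast h2
    rw [← Int.cast_smul_eq_zsmul K, smul_eq_zero]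
    simp [h2, Prod.ext_iff, sub_eq_zero]
  constructor
  · rintro ⟨h1, _, _, h4, h5, h6⟩ a
    rw [hz]
    refine ⟨h1 _ _ _, ?_⟩
    rw [h4, h5, h6]
    abel
  · intro hb
    refine ⟨?_, hl, hr, ?_, ?_, ?_⟩
    · intro x y z
      have := (hz _).1 (hb (fun i => if i = 0 then ((x : A), (0:M)) else if i = 1 then (y, 0) else (z, 0)))
      simpa using this.1
    · intro x y v
      have := (hz _).1 (hb (fun i => if i = 0 then ((x : A), (0:M)) else if i = 1 then (y, 0) else (0, v)))
      simpa using this.2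
    · intro v x y
      have := (hz _).1 (hb (fun i => if i = 0 then ((0:A), v) else if i = 1 then (x, 0) else (y, 0)))
      have h := this.2
      simp at h
      exact h.symm
    · intro x v y
      have := (hz _).1 (hb (fun i => if i = 0 then ((x:A), (0:M)) else if i = 1 then (0, v) else (y, 0)))
      have h := this.2
      simp at h
      exact h.symm
end
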